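/- For every integer n ≥ 1: 2 Σ_{k=1}^{n} k (−1)^{n+k} binom(2n, n+k) = (−1)^{n+1} · ((n+1)/(2n−1)) · binom(2n, n+1). -/

import Mathlib

/-!
Applying Pascal's rule twice to `(2n).choose (n+k)` writes `k (-1)^k (2n).choose (n+k)` as a
difference `g (k+1) - g k`, so the sum telescopes to `-(2n-2).choose (n-1)`. The right-hand side
is `2 (-1)^(n+1) (2n-2).choose (n-1)` by the recursion `(m+1) C(2m+2, m+1) = 2(2m+1) C(2m, m)`
for central binomial coefficients.
-/

open Finset Nat

def chooseTelescope (m k : ℕ) : ℤ :=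
  (-1) ^ k * ((2 * m).choose (m + k) - k * (2 * m + 1).choose (m + k))

lemma mul_neg_one_pow_mul_choose_eq_chooseTelescope_sub (m k : ℕ) :
    (k : ℤ) * (-1) ^ k * (2 * (m + 1)).choose (m + 1 + k)
      = chooseTelescope m (k + 1) - chooseTelescope m k := by
  have hpascal₁ := choose_succ_succ (2 * m + 1) (m + k)
  have hpascal₂ := choose_succ_succ (2 * m) (m + k)
  rw [show 2 * (m + 1) = 2 * m + 1 + 1 by ring, show m + 1 + k = m + k + 1 by ring]
  simp only [chooseTelescope, ← add_assoc, hpascal₁, hpascal₂]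
  push_cast
  ring

lemma sum_Icc_mul_neg_one_pow_mul_choose (m : ℕ) :
    ∑ k ∈ Icc 1 (m + 1), (k : ℤ) * (-1) ^ k * (2 * (m + 1)).choose (m + 1 + k)
      = -centralBinom m := by
  simp only [mul_neg_one_pow_mul_choose_eq_chooseTelescope_sub]
  rw [sum_Icc_sub (by omega)]
  have hvanish₁ : (2 * m).choose (m + (m + 1 + 1)) = 0 := choose_eq_zero_of_lt (by omega)
  have hvanish₂ : (2 * m + 1).choose (m + (m + 1 + 1)) = 0 := choose_eq_zero_of_lt (by omega)
  have hpascal := choose_succ_succ (2 * m) m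
  simp only [chooseTelescope, hvanish₁, hvanish₂, centralBinom, hpascal]
  push_cast
  ring

lemma add_two_mul_choose_add_two (m : ℕ) :
    (m + 2) * (2 * (m + 1)).choose (m + 2) = 2 * (2 * m + 1) * centralBinom m := by
  rw [mul_comm, choose_succ_right_eq, ← succ_mul_centralBinom_succ, centralBinom]
  rw [show 2 * (m + 1) - (m + 1) = m + 1 by omega, mul_comm]

theorem stmt_14 (n : ℕ) (hn : 1 ≤ n) :
    2 * ∑ k ∈ Finset.Icc 1 n,
        ((k : ℝ) * (-1 : ℝ) ^ (n + k) * (Nat.choose (2 * n) (n + k) : ℝ))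
      = (-1 : ℝ) ^ (n + 1) * (((n : ℝ) + 1) / (2 * (n : ℝ) - 1))
        * (Nat.choose (2 * n) (n + 1) : ℝ) := by
  obtain ⟨m, rfl⟩ := Nat.exists_eq_add_of_le' hn
  have hsum : ∑ k ∈ Icc 1 (m + 1), (k : ℝ) * (-1) ^ k * (2 * (m + 1)).choose (m + 1 + k)
      = -centralBinom m := by
    exact_mod_cast sum_Icc_mul_neg_one_pow_mul_choose m
  have hchoose : ((m : ℝ) + 2) * (2 * (m + 1)).choose (m + 1 + 1)
      = 2 * (2 * m + 1) * centralBinom m := by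
    exact_mod_cast add_two_mul_choose_add_two m
  have hden : 2 * ((m + 1 : ℕ) : ℝ) - 1 ≠ 0 := by push_cast; ring_nf; positivity
  have hfactor (k : ℕ) : (k : ℝ) * (-1) ^ (m + 1 + k) * (2 * (m + 1)).choose (m + 1 + k)
      = (-1) ^ (m + 1) * (k * (-1) ^ k * (2 * (m + 1)).choose (m + 1 + k)) := by ring
  rw [sum_congr rfl fun k _ => hfactor k, ← mul_sum, hsum]
  field_simp
  push_cast at hchoose ⊢
  linear_combination -(-1 : ℝ) ^ m * hchoose
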